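/- (Worst-case expected square loss identity.) Let (X_1,Y_1),…,(X_n,Y_n) ∈ ℝ^d × ℝ, let P_n be their empirical measure, let q, t ∈ [1,∞] with conjugates p, s (1/p + 1/q = 1, 1/s + 1/t = 1), let α ∈ ℝ^d̄ have strictly positive entries, and let c be the cost function c((x,y),(x',y')) = ‖x − x'‖_{α⁻¹-(q,t)}² if y = y' and +∞ otherwise. Then for every β ∈ ℝ^d and every δ > 0, sup { E_P[(Y − Xᵀβ)²] : P a probability measure on ℝ^{d+1} with D_c(P, P_n) ≤ δ } = ( (E_{P_n}[(Y − Xᵀβ)²])^{1/2} + √δ · ‖β‖_{α-(p,s)} )². -/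

import Mathlib

open scoped ENNReal BigOperators
open MeasureTheory Filter

/-- The l_p norm (p ∈ [1,∞], with sup modification at p = ∞) of a finite real vector. -/
noncomputable def lpn (p : ℝ≥0∞) {ι : Type} [Fintype ι] (x : ι → ℝ) : ℝ :=
  ‖(WithLp.equiv p (ι → ℝ)).symm x‖

/-- The α-(p,s) groupwise norm: ‖x‖ = ( Σ_i α_i^s ‖x(G_i)‖_p^s )^{1/s}. -/
noncomputable def gnorm {d dbar : ℕ} (G : Fin dbar → Finset (Fin d)) (α : Fin dbar → ℝ)
    (p s : ℝ≥0∞) (x : Fin d → ℝ) : ℝ :=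
  lpn s (fun i => α i * lpn p (fun j : {k // k ∈ G i} => x j.1))

/-- G_1, …, G_d̄ form a partition of {1,…,d} into nonempty disjoint groups. -/
def IsPartition {d dbar : ℕ} (G : Fin dbar → Finset (Fin d)) : Prop :=
  (∀ i, (G i).Nonempty) ∧ (∀ i j, i ≠ j → Disjoint (G i) (G j)) ∧ (∀ k, ∃ i, k ∈ G i)

/-- Optimal transport discrepancy with cost `c`: the Kantorovich infimum over couplings of
`P` and `Q`. -/
noncomputable def Dc {E : Type} [MeasurableSpace E] (c : E → E → ℝ≥0∞)
    (P Q : Measure E) : ℝ≥0∞ :=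
  ⨅ (π : Measure (E × E)) (_ : π.map Prod.fst = P) (_ : π.map Prod.snd = Q),
    ∫⁻ z, c z.1 z.2 ∂π

/-!
The two group norms are dual: Hölder's inequality inside each group and then across groups gives
`|⟪u, β⟫| ≤ ‖u‖_{α⁻¹-(q,t)} ‖β‖_{α-(p,s)}`, and the equality cases of both Hölder inequalities
give a `v` in the unit ball of the first norm with `⟪v, β⟫ = ‖β‖_{α-(p,s)}`.

Upper bound: a coupling of finite cost never moves the labels, so along it the residual changes
by `⟪X - X', β⟫`, which is at most `‖β‖ ‖X - X'‖`; Minkowski's inequality in `L²` of the coupling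
bounds the `L²(P)` norm of the residual by its `L²(P_n)` norm plus `√δ ‖β‖`.

Lower bound: moving each `X_i` to `X_i - √δ w_i v`, where `w` is the vector of empirical residuals
normalised in `L²(P_n)`, costs at most `δ` and adds `√δ ‖β‖ w_i` to the `i`-th residual; this is
the equality case of Minkowski's inequality.
-/

open Topology

section FiniteLp

variable {ι : Type} [Fintype ι] {p q : ℝ≥0∞}

lemma lpn_top (x : ι → ℝ) : lpn ∞ x = ‖x‖ :=
  PiLp.norm_toLp x

lemma lpn_eq_sum (hp : 0 < p.toReal) (x : ι → ℝ) :
    lpn p x = (∑ i, |x i| ^ p.toReal) ^ (1 / p.toReal) := by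
  simp [lpn, PiLp.norm_eq_sum hp]

lemma lpn_one (x : ι → ℝ) : lpn 1 x = ∑ i, |x i| := by
  simp [lpn_eq_sum (p := 1) (by simp)]

variable [Fact (1 ≤ p)]

lemma lpn_nonneg (x : ι → ℝ) : 0 ≤ lpn p x :=
  norm_nonneg _

lemma lpn_smul (c : ℝ) (x : ι → ℝ) : lpn p (c • x) = |c| * lpn p x := by
  simp [lpn, norm_smul]

lemma continuous_lpn : Continuous (lpn p : (ι → ℝ) → ℝ) :=
  continuous_norm.comp (PiLp.continuous_toLp p _)

lemma lpn_mono {x y : ι → ℝ} (h : ∀ i, |x i| ≤ |y i|) : lpn p x ≤ lpn p y := by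
  rcases eq_or_ne p ∞ with rfl | hp
  · simpa [lpn_top] using pi_norm_le_iff_of_nonneg (norm_nonneg y) |>.2
      fun i => (h i).trans (norm_le_pi_norm y i)
  · have hp0 : 0 < p.toReal := ENNReal.toReal_pos (zero_lt_one.trans_le Fact.out).ne' hp
    rw [lpn_eq_sum hp0, lpn_eq_sum hp0]
    gcongr (∑ i, ?_ ^ _) ^ _ with i
    exact h i

lemma lpn_abs (x : ι → ℝ) : lpn p (fun i => |x i|) = lpn p x :=
  le_antisymm (lpn_mono fun _ => (abs_abs _).le) (lpn_mono fun _ => (abs_abs _).ge)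


lemma abs_sum_mul_le_lpn_top_mul_lpn_one (a b : ι → ℝ) :
    |∑ i, a i * b i| ≤ lpn ∞ a * lpn 1 b := by
  rw [lpn_top, lpn_one, Finset.mul_sum]
  refine (Finset.abs_sum_le_sum_abs _ _).trans (Finset.sum_le_sum fun i _ => ?_)
  rw [abs_mul]
  exact mul_le_mul_of_nonneg_right (norm_le_pi_norm a i) (abs_nonneg _)

end FiniteLp

section Holder

variable {ι : Type} [Fintype ι] {p q : ℝ≥0∞} [p.HolderConjugate q]

lemma abs_sum_mul_le_lpn_mul_lpn (a b : ι → ℝ) :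
    |∑ i, a i * b i| ≤ lpn p a * lpn q b := by
  rcases eq_or_ne p ∞ with rfl | hp
  · obtain rfl : q = 1 := (ENNReal.HolderConjugate.eq_top_iff_eq_one ∞ q).1 rfl
    exact abs_sum_mul_le_lpn_top_mul_lpn_one a b
  rcases eq_or_ne q ∞ with rfl | hq
  · obtain rfl : p = 1 := (ENNReal.HolderConjugate.eq_top_iff_eq_one ∞ p).1 rfl
    simpa [mul_comm] using abs_sum_mul_le_lpn_top_mul_lpn_one b a
  have h := ENNReal.HolderConjugate.toReal_of_ne_top hp hq
  rw [lpn_eq_sum h.pos, lpn_eq_sum h.symm.pos]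
  refine (Finset.abs_sum_le_sum_abs _ _).trans ?_
  simpa [abs_mul] using Real.inner_le_Lp_mul_Lq_of_nonneg Finset.univ h
    (f := fun i => |a i|) (g := fun i => |b i|) (fun i _ => abs_nonneg _) (fun i _ => abs_nonneg _)

lemma exists_lpn_le_one_sum_mul_eq_of_nonneg {b : ι → ℝ} (hb : ∀ i, 0 ≤ b i) :
    ∃ a : ι → ℝ, lpn q a ≤ 1 ∧ ∑ i, a i * b i = lpn p b := by
  classical
  rcases eq_or_ne p ∞ with rfl | hp
  · obtain rfl : q = 1 := (ENNReal.HolderConjugate.eq_top_iff_eq_one ∞ q).1 rfl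
    rcases isEmpty_or_nonempty ι with hι | hι
    · exact ⟨0, by simp [lpn_one], by simp [lpn_top, Subsingleton.elim b 0]⟩
    obtain ⟨j, hj⟩ := Finite.exists_max b
    refine ⟨Pi.single j 1, by simp [lpn_one, Pi.single_apply, apply_ite], ?_⟩
    have hnorm : ‖b‖ = b j := le_antisymm
      ((pi_norm_le_iff_of_nonneg (hb j)).2 fun i => by rw [Real.norm_of_nonneg (hb i)]; exact hj i)
      (by simpa [Real.norm_of_nonneg (hb j)] using norm_le_pi_norm b j)
    simp [lpn_top, hnorm, Pi.single_apply]
  rcases eq_or_ne q ∞ with rfl | hq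
  · obtain rfl : p = 1 := (ENNReal.HolderConjugate.eq_top_iff_eq_one ∞ p).1 rfl
    refine ⟨1, ?_, by simp [lpn_one, abs_of_nonneg (hb _)]⟩
    rw [lpn_top]
    exact (pi_norm_le_iff_of_nonneg zero_le_one).2 fun i => by simp
  have h := ENNReal.HolderConjugate.toReal_of_ne_top hp hq
  obtain ⟨⟨g, hg, hgb⟩, -⟩ := NNReal.isGreatest_Lp Finset.univ (fun i => (b i).toNNReal) h
  refine ⟨fun i => g i, ?_, ?_⟩
  · rw [lpn_eq_sum h.symm.pos]
    have := NNReal.coe_le_coe.2 (NNReal.rpow_le_one hg (one_div_nonneg.2 h.symm.nonneg))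
    simpa using this
  · rw [lpn_eq_sum h.pos]
    have := congrArg NNReal.toReal hgb
    simpa [Real.coe_toNNReal _ (hb _), abs_of_nonneg (hb _), mul_comm] using this

lemma exists_lpn_le_one_sum_mul_eq (b : ι → ℝ) :
    ∃ a : ι → ℝ, lpn q a ≤ 1 ∧ ∑ i, a i * b i = lpn p b := by
  have : Fact (1 ≤ p) := ⟨ENNReal.HolderConjugate.one_le p q⟩
  have : Fact (1 ≤ q) := ⟨ENNReal.HolderConjugate.one_le q p⟩
  obtain ⟨a, ha, hab⟩ :=
    exists_lpn_le_one_sum_mul_eq_of_nonneg (p := p) (q := q) fun i => abs_nonneg (b i)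
  refine ⟨fun i => SignType.sign (b i) * a i, (lpn_mono fun i => ?_).trans ha, ?_⟩
  · rw [abs_mul]
    refine mul_le_of_le_one_left (abs_nonneg _) ?_
    rcases lt_trichotomy (b i) 0 with h | h | h <;> simp [h]
  · rw [← lpn_abs, ← hab]
    refine Finset.sum_congr rfl fun i _ => ?_
    rw [← sign_mul_self]
    ring

end Holder

section GroupNorm

variable {d dbar : ℕ} {G : Fin dbar → Finset (Fin d)} {α : Fin dbar → ℝ} {p q s t : ℝ≥0∞}

lemma IsPartition.sum_eq_sum_sum (hG : IsPartition G) {M : Type*} [AddCommMonoid M]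
    (f : Fin d → M) : ∑ k, f k = ∑ i, ∑ k ∈ G i, f k := by
  classical
  rw [← Finset.sum_biUnion fun i _ j _ hij => hG.2.1 i j hij]
  congr
  ext k
  simpa using hG.2.2 k

lemma IsPartition.eq_of_mem (hG : IsPartition G) {i i' : Fin dbar} {k : Fin d}
    (hi : k ∈ G i) (hi' : k ∈ G i') : i = i' := by
  by_contra h
  exact Finset.disjoint_left.1 (hG.2.1 i i' h) hi hi'

lemma gnorm_nonneg [Fact (1 ≤ s)] (x : Fin d → ℝ) : 0 ≤ gnorm G α p s x :=
  lpn_nonneg _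

lemma gnorm_smul [Fact (1 ≤ p)] [Fact (1 ≤ s)] (c : ℝ) (x : Fin d → ℝ) :
    gnorm G α p s (c • x) = |c| * gnorm G α p s x := by
  have h : (fun i => α i * lpn p fun j : {k // k ∈ G i} => (c • x) j.1)
      = |c| • fun i => α i * lpn p fun j : {k // k ∈ G i} => x j.1 := by
    ext i
    rw [Pi.smul_apply, smul_eq_mul, show (fun j : {k // k ∈ G i} => (c • x) j.1)
      = c • fun j : {k // k ∈ G i} => x j.1 from rfl, lpn_smul]
    ring
  rw [gnorm, h, lpn_smul, abs_abs, gnorm]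

lemma continuous_gnorm [Fact (1 ≤ p)] [Fact (1 ≤ s)] : Continuous (gnorm G α p s) :=
  continuous_lpn.comp <| continuous_pi fun _ => continuous_const.mul <|
    continuous_lpn.comp <| continuous_pi fun j => continuous_apply j.1

variable [p.HolderConjugate q] [s.HolderConjugate t]

lemma abs_sum_mul_le_gnorm_mul_gnorm (hG : IsPartition G) (hα : ∀ i, α i ≠ 0)
    (u β : Fin d → ℝ) : |∑ k, u k * β k| ≤ gnorm G α⁻¹ q t u * gnorm G α p s β := by
  have hgroup : ∀ i, |∑ k ∈ G i, u k * β k|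
      ≤ (α i)⁻¹ * lpn q (fun j : {k // k ∈ G i} => u j.1)
        * (α i * lpn p fun j : {k // k ∈ G i} => β j.1) := by
    intro i
    rw [mul_mul_mul_comm, inv_mul_cancel₀ (hα i), one_mul, ← Finset.sum_coe_sort]
    exact abs_sum_mul_le_lpn_mul_lpn _ _
  rw [hG.sum_eq_sum_sum]
  calc |∑ i, ∑ k ∈ G i, u k * β k| ≤ ∑ i, |∑ k ∈ G i, u k * β k| := Finset.abs_sum_le_sum_abs _ _
    _ ≤ _ := Finset.sum_le_sum fun i _ => hgroup i
    _ ≤ _ := (le_abs_self _).trans (abs_sum_mul_le_lpn_mul_lpn _ _)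

lemma exists_gnorm_le_one_sum_mul_eq (hG : IsPartition G) (hα : ∀ i, α i ≠ 0)
    (β : Fin d → ℝ) :
    ∃ v : Fin d → ℝ, gnorm G α⁻¹ q t v ≤ 1 ∧ ∑ k, v k * β k = gnorm G α p s β := by
  classical
  have : Fact (1 ≤ q) := ⟨ENNReal.HolderConjugate.one_le q p⟩
  have : Fact (1 ≤ t) := ⟨ENNReal.HolderConjugate.one_le t s⟩
  choose A hA hAβ using fun i => exists_lpn_le_one_sum_mul_eq (p := p) (q := q)
    fun j : {k // k ∈ G i} => β j.1
  obtain ⟨w, hw, hwβ⟩ := exists_lpn_le_one_sum_mul_eq (p := s) (q := t)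
    fun i => α i * lpn p fun j : {k // k ∈ G i} => β j.1
  let v : Fin d → ℝ := fun k => ∑ i, if h : k ∈ G i then w i * α i * A i ⟨k, h⟩ else 0
  have hv : ∀ i, (fun j : {k // k ∈ G i} => v j.1) = (w i * α i) • A i := by
    intro i
    ext j
    simp only [v, Pi.smul_apply, smul_eq_mul]
    rw [Finset.sum_eq_single i (fun i' _ hi' => dif_neg fun h => hi' (hG.eq_of_mem h j.2))
      (by simp), dif_pos j.2]
  refine ⟨v, (lpn_mono fun i => ?_).trans hw, ?_⟩
  · have hαi : |α i| ≠ 0 := abs_ne_zero.2 (hα i)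
    have key : |(α i)⁻¹ * lpn q (fun j : {k // k ∈ G i} => v j.1)| = |w i| * lpn q (A i) := by
      rw [hv, lpn_smul]
      simp only [abs_mul, abs_abs, abs_inv, abs_of_nonneg (lpn_nonneg (A i))]
      field_simp
    rw [Pi.inv_apply, key]
    exact mul_le_of_le_one_right (abs_nonneg _) (hA i)
  · rw [hG.sum_eq_sum_sum, gnorm, ← hwβ]
    refine Finset.sum_congr rfl fun i _ => ?_
    rw [← Finset.sum_coe_sort, ← hAβ i, Finset.mul_sum, Finset.mul_sum]
    refine Finset.sum_congr rfl fun j _ => ?_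
    rw [show v j.1 = (w i * α i) * A i j from congrFun (hv i) j]
    ring

end GroupNorm

lemma ENNReal.ofReal_inv_natCast_mul_sum {n : ℕ} (hn : 0 < n) {a : Fin n → ℝ}
    (ha : ∀ i, 0 ≤ a i) :
    ENNReal.ofReal ((n : ℝ)⁻¹ * ∑ i, a i) = (n : ℝ≥0∞)⁻¹ * ∑ i, ENNReal.ofReal (a i) := by
  rw [ENNReal.ofReal_mul (by positivity), ENNReal.ofReal_sum_of_nonneg fun i _ => ha i,
    ENNReal.ofReal_inv_of_pos (by exact_mod_cast hn), ENNReal.ofReal_natCast]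

lemma eLpNorm_two_eq_lintegral_rpow {α : Type*} [MeasurableSpace α] (f : α → ℝ)
    (μ : Measure α) :
    eLpNorm f 2 μ = (∫⁻ x, ENNReal.ofReal (f x ^ 2) ∂μ) ^ (1 / 2 : ℝ) := by
  rw [eLpNorm_eq_lintegral_rpow_enorm_toReal two_ne_zero ENNReal.ofNat_ne_top]
  simp [Real.enorm_eq_ofReal_abs, ← ENNReal.ofReal_pow (abs_nonneg _)]

lemma sq_eLpNorm_two {α : Type*} [MeasurableSpace α] (f : α → ℝ) (μ : Measure α) :
    eLpNorm f 2 μ ^ 2 = ∫⁻ x, ENNReal.ofReal (f x ^ 2) ∂μ := by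
  rw [eLpNorm_two_eq_lintegral_rpow, ← ENNReal.rpow_natCast, ← ENNReal.rpow_mul]
  norm_num

lemma Dc_le_lintegral {E : Type} [MeasurableSpace E] (c : E → E → ℝ≥0∞) {P Q : Measure E}
    {π : Measure (E × E)}
    (hπP : π.map Prod.fst = P) (hπQ : π.map Prod.snd = Q) : Dc c P Q ≤ ∫⁻ z, c z.1 z.2 ∂π :=
  (iInf_le _ π).trans (iInf₂_le hπP hπQ)

section Empirical

variable {E : Type} [MeasurableSpace E] {n : ℕ}

noncomputable def empiricalMeasure (x : Fin n → E) : Measure E :=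
  (n : ℝ≥0∞)⁻¹ • ∑ i, Measure.dirac (x i)

lemma isProbabilityMeasure_empiricalMeasure (hn : 0 < n) (x : Fin n → E) :
    IsProbabilityMeasure (empiricalMeasure x) := by
  constructor
  simp [empiricalMeasure, ENNReal.inv_mul_cancel (Nat.cast_ne_zero.2 hn.ne')]

lemma map_empiricalMeasure {F : Type} [MeasurableSpace F] {g : E → F} (hg : Measurable g)
    (x : Fin n → E) : (empiricalMeasure x).map g = empiricalMeasure (g ∘ x) := by
  simp [empiricalMeasure, Measure.map_smul, Measure.map_finset_sum' hg.aemeasurable,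
    Measure.map_dirac' hg]

lemma lintegral_empiricalMeasure [MeasurableSingletonClass E] (x : Fin n → E)
    (f : E → ℝ≥0∞) :
    ∫⁻ z, f z ∂empiricalMeasure x = (n : ℝ≥0∞)⁻¹ * ∑ i, f (x i) := by
  simp [empiricalMeasure]

lemma lintegral_ofReal_empiricalMeasure [MeasurableSingletonClass E] (hn : 0 < n)
    (x : Fin n → E) {f : E → ℝ} (hf : ∀ i, 0 ≤ f (x i)) :
    ∫⁻ z, ENNReal.ofReal (f z) ∂empiricalMeasure x
      = ENNReal.ofReal ((n : ℝ)⁻¹ * ∑ i, f (x i)) := by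
  rw [lintegral_empiricalMeasure, ENNReal.ofReal_inv_natCast_mul_sum hn hf]

lemma eLpNorm_empiricalMeasure [MeasurableSingletonClass E] (hn : 0 < n) (x : Fin n → E)
    (f : E → ℝ) :
    eLpNorm f 2 (empiricalMeasure x) = ENNReal.ofReal √((n : ℝ)⁻¹ * ∑ i, f (x i) ^ 2) := by
  rw [eLpNorm_two_eq_lintegral_rpow, lintegral_ofReal_empiricalMeasure hn x fun i => sq_nonneg _,
    ENNReal.ofReal_rpow_of_nonneg (by positivity) (by norm_num), Real.sqrt_eq_rpow]

end Empirical

lemma exists_mean_sq_eq_one_mean_sq_add_mul {n : ℕ} (hn : 0 < n) (e : Fin n → ℝ) :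
    ∃ w : Fin n → ℝ, (n : ℝ)⁻¹ * ∑ i, w i ^ 2 = 1 ∧ ∀ ρ : ℝ,
      (n : ℝ)⁻¹ * ∑ i, (e i + ρ * w i) ^ 2 = (√((n : ℝ)⁻¹ * ∑ i, e i ^ 2) + ρ) ^ 2 := by
  set I := (n : ℝ)⁻¹ * ∑ i, e i ^ 2 with hI
  have hn' : (n : ℝ) ≠ 0 := by positivity
  suffices ∃ w : Fin n → ℝ, (n : ℝ)⁻¹ * ∑ i, w i ^ 2 = 1 ∧ (n : ℝ)⁻¹ * ∑ i, e i * w i = √I by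
    obtain ⟨w, hw, hew⟩ := this
    refine ⟨w, hw, fun ρ => ?_⟩
    have hexp : ∑ i, (e i + ρ * w i) ^ 2
        = ∑ i, e i ^ 2 + 2 * ρ * ∑ i, e i * w i + ρ ^ 2 * ∑ i, w i ^ 2 := by
      simp only [Finset.mul_sum, ← Finset.sum_add_distrib]
      exact Finset.sum_congr rfl fun i _ => by ring
    rw [hexp, add_sq, Real.sq_sqrt (by positivity), ← hew, hI]
    linear_combination ρ ^ 2 * hw
  by_cases h0 : I = 0
  · have he : ∀ i, e i = 0 := by
      have : ∑ i, e i ^ 2 = 0 := by simpa [hI, hn'] using h0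
      intro i
      simpa using (Finset.sum_eq_zero_iff_of_nonneg fun i _ => sq_nonneg (e i)).1 this i
        (Finset.mem_univ _)
    exact ⟨1, by simp [hn'], by simp [he, h0]⟩
  · have hI0 : 0 < I := lt_of_le_of_ne (by positivity) (Ne.symm h0)
    refine ⟨fun i => e i / √I, ?_, ?_⟩
    · simp_rw [div_pow, Real.sq_sqrt hI0.le, ← Finset.sum_div, ← mul_div_assoc, ← hI,
        div_self h0]
    · simp_rw [mul_div, ← sq, ← Finset.sum_div, ← mul_div_assoc, ← hI, Real.div_sqrt]

section WorstCase

variable {ι : Type} {N : (ι → ℝ) → ℝ}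

def linearResidual [Fintype ι] (β : ι → ℝ) (z : (ι → ℝ) × ℝ) : ℝ :=
  z.2 - ∑ k, z.1 k * β k

noncomputable def labelCost (N : (ι → ℝ) → ℝ) (u w : (ι → ℝ) × ℝ) : ℝ≥0∞ :=
  if u.2 = w.2 then ENNReal.ofReal (N (u.1 - w.1) ^ 2) else ⊤

lemma continuous_linearResidual [Fintype ι] (β : ι → ℝ) : Continuous (linearResidual β) := by
  unfold linearResidual
  fun_prop

lemma measurable_labelCost (hN : Measurable N) :
    Measurable fun z : ((ι → ℝ) × ℝ) × ((ι → ℝ) × ℝ) => labelCost N z.1 z.2 := by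
  unfold labelCost
  refine Measurable.ite (measurableSet_eq_fun (by fun_prop) (by fun_prop)) ?_ measurable_const
  exact ENNReal.measurable_ofReal.comp ((hN.comp (by fun_prop)).pow_const 2)

lemma ofReal_sq_le_labelCost (u w : (ι → ℝ) × ℝ) :
    ENNReal.ofReal (N (u.1 - w.1) ^ 2) ≤ labelCost N u w := by
  unfold labelCost
  split_ifs <;> simp

lemma ae_label_eq_of_lintegral_labelCost_ne_top (hN : Measurable N)
    {π : Measure (((ι → ℝ) × ℝ) × ((ι → ℝ) × ℝ))} (hπ : ∫⁻ z, labelCost N z.1 z.2 ∂π ≠ ∞) :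
    ∀ᵐ z ∂π, z.1.2 = z.2.2 := by
  filter_upwards [ae_lt_top (measurable_labelCost hN) hπ] with z hz
  by_contra h
  simp [labelCost, h] at hz

variable [Fintype ι] {β : ι → ℝ} {B : ℝ} {n : ℕ}

lemma eLpNorm_linearResidual_le_of_coupling (hN : Measurable N)
    (hB : ∀ u, |∑ k, u k * β k| ≤ N u * B) {P Q : Measure ((ι → ℝ) × ℝ)}
    {π : Measure (((ι → ℝ) × ℝ) × ((ι → ℝ) × ℝ))} (hπP : π.map Prod.fst = P)
    (hπQ : π.map Prod.snd = Q) (hπ : ∫⁻ z, labelCost N z.1 z.2 ∂π ≠ ∞) :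
    eLpNorm (linearResidual β) 2 P ≤
      eLpNorm (linearResidual β) 2 Q + ‖B‖ₑ * (∫⁻ z, labelCost N z.1 z.2 ∂π) ^ (1 / 2 : ℝ) := by
  have hr := (continuous_linearResidual β).measurable
  set D : ((ι → ℝ) × ℝ) × ((ι → ℝ) × ℝ) → ℝ := fun z => ∑ k, (z.1.1 - z.2.1) k * β k with hD
  have hfst : linearResidual β ∘ Prod.fst =ᵐ[π] linearResidual β ∘ Prod.snd - D := by
    filter_upwards [ae_label_eq_of_lintegral_labelCost_ne_top hN hπ] with z hz
    simp only [Function.comp, Pi.sub_apply, linearResidual, hD, hz, sub_mul,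
      Finset.sum_sub_distrib]
    ring
  have hDB : eLpNorm D 2 π ≤ ‖B‖ₑ * eLpNorm (fun z => N (z.1.1 - z.2.1)) 2 π := by
    refine (eLpNorm_mono fun z => ?_).trans (eLpNorm_const_smul_le (c := B))
    rw [Pi.smul_apply, smul_eq_mul, Real.norm_eq_abs, Real.norm_eq_abs, mul_comm]
    exact (hB _).trans (le_abs_self _)
  have hcost : eLpNorm (fun z => N (z.1.1 - z.2.1)) 2 π
      ≤ (∫⁻ z, labelCost N z.1 z.2 ∂π) ^ (1 / 2 : ℝ) := by
    rw [eLpNorm_two_eq_lintegral_rpow]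
    gcongr with z
    exact ofReal_sq_le_labelCost z.1 z.2
  calc eLpNorm (linearResidual β) 2 P = eLpNorm (linearResidual β ∘ Prod.snd - D) 2 π := by
        rw [← hπP, eLpNorm_map_measure hr.aestronglyMeasurable measurable_fst.aemeasurable,
          eLpNorm_congr_ae hfst]
    _ ≤ eLpNorm (linearResidual β ∘ Prod.snd) 2 π + eLpNorm D 2 π :=
        eLpNorm_sub_le (hr.comp measurable_snd).aestronglyMeasurable
          (Continuous.aestronglyMeasurable (by fun_prop)) one_le_two
    _ ≤ _ := by
        rw [← hπQ, eLpNorm_map_measure hr.aestronglyMeasurable measurable_snd.aemeasurable]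
        gcongr
        exact hDB.trans (by gcongr)

lemma eLpNorm_linearResidual_le_of_Dc_lt_top (hN : Measurable N)
    (hB : ∀ u, |∑ k, u k * β k| ≤ N u * B) {P Q : Measure ((ι → ℝ) × ℝ)}
    (hPQ : Dc (labelCost N) P Q < ∞) :
    eLpNorm (linearResidual β) 2 P ≤
      eLpNorm (linearResidual β) 2 Q + ‖B‖ₑ * Dc (labelCost N) P Q ^ (1 / 2 : ℝ) := by
  have : (𝓝[>] Dc (labelCost N) P Q).NeBot := nhdsGT_neBot_of_exists_gt ⟨∞, hPQ⟩
  have hcont : Continuous fun x : ℝ≥0∞ =>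
      eLpNorm (linearResidual β) 2 Q + ‖B‖ₑ * x ^ (1 / 2 : ℝ) :=
    continuous_const.add
      ((ENNReal.continuous_const_mul enorm_ne_top).comp ENNReal.continuous_rpow_const)
  refine ge_of_tendsto (x := 𝓝[>] Dc (labelCost N) P Q)
    ((hcont.tendsto _).mono_left nhdsWithin_le_nhds) ?_
  filter_upwards [self_mem_nhdsWithin] with x hx
  obtain ⟨π, hπQ, hπP, hπ⟩ : ∃ π : Measure (((ι → ℝ) × ℝ) × ((ι → ℝ) × ℝ)),
      π.map Prod.snd = Q ∧ π.map Prod.fst = P ∧ ∫⁻ z, labelCost N z.1 z.2 ∂π < x := by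
    simpa [Dc, iInf_lt_iff] using hx
  refine (eLpNorm_linearResidual_le_of_coupling hN hB hπP hπQ (hπ.trans_le le_top).ne).trans ?_
  gcongr

lemma exists_Dc_le_lintegral_sq_linearResidual_eq (hn : 0 < n) (hN_nonneg : ∀ u, 0 ≤ N u)
    (hN_smul : ∀ (c : ℝ) u, N (c • u) = |c| * N u) {v : ι → ℝ} (hv : N v ≤ 1)
    (hvβ : ∑ k, v k * β k = B) (hB : 0 ≤ B) (x : Fin n → (ι → ℝ) × ℝ) {r : ℝ} (hr : 0 ≤ r) :
    ∃ x' : Fin n → (ι → ℝ) × ℝ,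
      Dc (labelCost N) (empiricalMeasure x') (empiricalMeasure x) ≤ ENNReal.ofReal (r ^ 2) ∧
      ∫⁻ z, ENNReal.ofReal (linearResidual β z ^ 2) ∂empiricalMeasure x' =
        (eLpNorm (linearResidual β) 2 (empiricalMeasure x) + ENNReal.ofReal (r * B)) ^ 2 := by
  obtain ⟨w, hw, hadd⟩ :=
    exists_mean_sq_eq_one_mean_sq_add_mul hn fun i => linearResidual β (x i)
  let x' : Fin n → (ι → ℝ) × ℝ := fun i => ((x i).1 - (r * w i) • v, (x i).2)
  have hres : ∀ i, linearResidual β (x' i) = linearResidual β (x i) + r * B * w i := by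
    intro i
    have hshift : ∑ k, r * w i * v k * β k = r * B * w i := by
      rw [← hvβ, Finset.mul_sum, Finset.sum_mul]
      exact Finset.sum_congr rfl fun k _ => by ring
    simp only [x', linearResidual, Pi.sub_apply, Pi.smul_apply, smul_eq_mul, sub_mul,
      Finset.sum_sub_distrib, hshift]
    ring
  have hcost : ∀ i, labelCost N (x' i) (x i) ≤ ENNReal.ofReal ((r * w i) ^ 2) := by
    intro i
    have hΔ : (x' i).1 - (x i).1 = (-(r * w i)) • v := by
      simp only [x', neg_smul]
      abel
    rw [labelCost, if_pos rfl, hΔ, hN_smul, mul_pow, sq_abs, neg_sq]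
    gcongr
    exact mul_le_of_le_one_right (sq_nonneg _) (pow_le_one₀ (hN_nonneg v) hv)
  refine ⟨x', ?_, ?_⟩
  · calc Dc (labelCost N) (empiricalMeasure x') (empiricalMeasure x)
        ≤ ∫⁻ z, labelCost N z.1 z.2 ∂empiricalMeasure fun i => (x' i, x i) :=
          Dc_le_lintegral _ (map_empiricalMeasure measurable_fst _)
            (map_empiricalMeasure measurable_snd _)
      _ ≤ (n : ℝ≥0∞)⁻¹ * ∑ i, ENNReal.ofReal ((r * w i) ^ 2) := by
          rw [lintegral_empiricalMeasure]
          gcongr with i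
          exact hcost i
      _ = ENNReal.ofReal (r ^ 2) := by
          rw [← ENNReal.ofReal_inv_natCast_mul_sum hn fun i => sq_nonneg _]
          congr 1
          simp only [mul_pow, ← Finset.mul_sum]
          linear_combination r ^ 2 * hw
  · rw [lintegral_ofReal_empiricalMeasure hn x' fun i => sq_nonneg _, eLpNorm_empiricalMeasure hn,
      ← ENNReal.ofReal_add (Real.sqrt_nonneg _) (by positivity),
      ← ENNReal.ofReal_pow (by positivity), ← hadd]
    simp only [hres, mul_comm r B, mul_assoc]

theorem iSup_lintegral_sq_linearResidual_eq (hn : 0 < n) (hN_nonneg : ∀ u, 0 ≤ N u)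
    (hN_smul : ∀ (c : ℝ) u, N (c • u) = |c| * N u) (hN : Measurable N)
    (hB : ∀ u, |∑ k, u k * β k| ≤ N u * B) (hβ : ∃ v, N v ≤ 1 ∧ ∑ k, v k * β k = B)
    (x : Fin n → (ι → ℝ) × ℝ) {δ : ℝ} (hδ : 0 ≤ δ) :
    ⨆ (P : Measure ((ι → ℝ) × ℝ)) (_ : IsProbabilityMeasure P)
        (_ : Dc (labelCost N) P (empiricalMeasure x) ≤ ENNReal.ofReal δ),
        ∫⁻ z, ENNReal.ofReal (linearResidual β z ^ 2) ∂P
      = ((∫⁻ z, ENNReal.ofReal (linearResidual β z ^ 2) ∂empiricalMeasure x) ^ (1 / 2 : ℝ)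
          + ENNReal.ofReal (√δ * B)) ^ 2 := by
  obtain ⟨v, hv, hvβ⟩ := hβ
  have hB0 : 0 ≤ B := by
    have := hvβ ▸ hB v
    nlinarith [le_abs_self B, neg_abs_le B, hN_nonneg v]
  rw [← eLpNorm_two_eq_lintegral_rpow]
  refine le_antisymm (iSup₂_le fun P _ => iSup_le fun hP => ?_) ?_
  · rw [← sq_eLpNorm_two]
    gcongr
    refine (eLpNorm_linearResidual_le_of_Dc_lt_top hN hB
      (hP.trans_lt ENNReal.ofReal_lt_top)).trans ?_
    rw [Real.enorm_of_nonneg hB0, mul_comm √δ, ENNReal.ofReal_mul hB0, Real.sqrt_eq_rpow,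
      ← ENNReal.ofReal_rpow_of_nonneg hδ (by norm_num)]
    gcongr
  · obtain ⟨x', hD, hval⟩ := exists_Dc_le_lintegral_sq_linearResidual_eq hn hN_nonneg hN_smul hv
      hvβ hB0 x (Real.sqrt_nonneg δ)
    rw [Real.sq_sqrt hδ] at hD
    exact le_iSup₂_of_le (empiricalMeasure x') (isProbabilityMeasure_empiricalMeasure hn x')
      (le_iSup_of_le hD hval.ge)

end WorstCase

theorem statement6_general {d dbar : ℕ} {n : ℕ} (hn : 0 < n)
    (G : Fin dbar → Finset (Fin d)) (hG : IsPartition G)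
    (α : Fin dbar → ℝ) (hα : ∀ i, 0 < α i)
    (p q s t : ℝ≥0∞)
    (hpq : 1 / p + 1 / q = 1) (hst : 1 / s + 1 / t = 1)
    (X : Fin n → Fin d → ℝ) (Y : Fin n → ℝ) (β : Fin d → ℝ) (δ : ℝ) (hδ : 0 < δ) :
    (⨆ (P : Measure ((Fin d → ℝ) × ℝ)) (_ : IsProbabilityMeasure P)
        (_ : Dc
            (fun u w => if u.2 = w.2 then
              ENNReal.ofReal ((gnorm G (fun i => (α i)⁻¹) q t (u.1 - w.1)) ^ 2) else ⊤)
            P ((n : ℝ≥0∞)⁻¹ • ∑ i : Fin n, Measure.dirac (X i, Y i)) ≤ ENNReal.ofReal δ),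
      ∫⁻ z, ENNReal.ofReal ((z.2 - ∑ k, z.1 k * β k) ^ 2) ∂P)
    = ((∫⁻ z, ENNReal.ofReal ((z.2 - ∑ k, z.1 k * β k) ^ 2)
            ∂((n : ℝ≥0∞)⁻¹ • ∑ i : Fin n, Measure.dirac (X i, Y i))) ^ (1 / 2 : ℝ)
        + ENNReal.ofReal (Real.sqrt δ * gnorm G α p s β)) ^ 2 := by
  have : p.HolderConjugate q := ENNReal.holderConjugate_iff.2 (by simpa using hpq)
  have : s.HolderConjugate t := ENNReal.holderConjugate_iff.2 (by simpa using hst)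
  have : Fact (1 ≤ q) := ⟨ENNReal.HolderConjugate.one_le q p⟩
  have : Fact (1 ≤ t) := ⟨ENNReal.HolderConjugate.one_le t s⟩
  have hα₀ : ∀ i, α i ≠ 0 := fun i => (hα i).ne'
  exact iSup_lintegral_sq_linearResidual_eq (N := gnorm G α⁻¹ q t) (B := gnorm G α p s β) hn
    (fun _ => gnorm_nonneg _) gnorm_smul
    continuous_gnorm.measurable (fun u => abs_sum_mul_le_gnorm_mul_gnorm hG hα₀ u β)
    (exists_gnorm_le_one_sum_mul_eq hG hα₀ β) (fun i => (X i, Y i)) hδ.le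

theorem statement6 {d dbar : ℕ} (hd : 1 ≤ d) {n : ℕ} (hn : 0 < n)
    (G : Fin dbar → Finset (Fin d)) (hG : IsPartition G)
    (α : Fin dbar → ℝ) (hα : ∀ i, 0 < α i)
    (p q s t : ℝ≥0∞) (hp : 1 ≤ p) (hq : 1 ≤ q) (hs : 1 ≤ s) (ht : 1 ≤ t)
    (hpq : 1 / p + 1 / q = 1) (hst : 1 / s + 1 / t = 1)
    (X : Fin n → Fin d → ℝ) (Y : Fin n → ℝ) (β : Fin d → ℝ) (δ : ℝ) (hδ : 0 < δ) :
    (⨆ (P : Measure ((Fin d → ℝ) × ℝ)) (_ : IsProbabilityMeasure P)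
        (_ : Dc
            (fun u w => if u.2 = w.2 then
              ENNReal.ofReal ((gnorm G (fun i => (α i)⁻¹) q t (u.1 - w.1)) ^ 2) else ⊤)
            P ((n : ℝ≥0∞)⁻¹ • ∑ i : Fin n, Measure.dirac (X i, Y i)) ≤ ENNReal.ofReal δ),
      ∫⁻ z, ENNReal.ofReal ((z.2 - ∑ k, z.1 k * β k) ^ 2) ∂P)
    = ((∫⁻ z, ENNReal.ofReal ((z.2 - ∑ k, z.1 k * β k) ^ 2)
            ∂((n : ℝ≥0∞)⁻¹ • ∑ i : Fin n, Measure.dirac (X i, Y i))) ^ (1 / 2 : ℝ)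
        + ENNReal.ofReal (Real.sqrt δ * gnorm G α p s β)) ^ 2 :=
  statement6_general hn G hG α hα p q s t hpq hst X Y β δ hδ
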